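/- arXiv:1305.4866 — 3 statements merged into one kernel-verified Lean document; each statement's English description precedes it below -/
import Mathlib

section
/- Suppose u₃ : [0, T) → ℝ is differentiable with u₃(0) = 0, u₃' ≤ -b - m·coth(mτ)·u₃ on (0, T), where b > 0, m > 0. Then u₃(τ) ≤ -b(cosh mτ - 1)/(m sinh mτ) for all τ ∈ (0, T), and consequently ∫₀^τ u₃ ds ≤ -(2b/m²) log cosh(mτ/2). -/
/-! Multiplying by the integrating factor `sinh (m τ)` turns the differential inequality into
`(u₃ sinh (m τ) + b (cosh (m τ) - 1) / m)' ≤ 0`; since this function vanishes at `0`, it is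
nonpositive, which is the pointwise bound. By the half-angle formula that bound equals
`-(b / m) tanh (m τ / 2)`, the derivative of `-(2 b / m²) log cosh (m τ / 2)`, and integrating it
gives the bound on `∫ u₃`. -/

open Real Set MeasureTheory

namespace Real

theorem cosh_sub_one_div_sinh (x : ℝ) : (cosh x - 1) / sinh x = tanh (x / 2) := by
  rcases eq_or_ne x 0 with rfl | hx
  · simp
  obtain ⟨t, rfl⟩ : ∃ t, x = 2 * t := ⟨x / 2, by ring⟩
  rw [show 2 * t / 2 = t by ring, tanh_eq_sinh_div_cosh,
    div_eq_div_iff (sinh_ne_zero.2 hx) (cosh_pos t).ne', cosh_two_mul,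
    sinh_two_mul]
  linear_combination cosh t * cosh_sq t

theorem continuous_tanh : Continuous tanh := by
  simp only [funext tanh_eq_sinh_div_cosh]
  exact continuous_sinh.div continuous_cosh fun x => (cosh_pos x).ne'

theorem hasDerivAt_log_cosh (x : ℝ) : HasDerivAt (fun y => log (cosh y)) (tanh x) x := by
  simpa [tanh_eq_sinh_div_cosh] using (hasDerivAt_cosh x).log (cosh_pos x).ne'

theorem integral_tanh (a b : ℝ) : ∫ x in a..b, tanh x = log (cosh b) - log (cosh a) :=
  intervalIntegral.integral_eq_sub_of_hasDerivAt (fun x _ => hasDerivAt_log_cosh x)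
    (continuous_tanh.intervalIntegrable a b)

end Real

section CothComparison

variable {u u' : ℝ → ℝ} {b m T : ℝ}

theorem antitoneOn_mul_sinh_add_of_le_neg_coth (hm : 0 < m)
    (hcont : ContinuousOn u (Ico 0 T))
    (hderiv : ∀ τ ∈ Ioo 0 T, HasDerivAt u (u' τ) τ)
    (hineq : ∀ τ ∈ Ioo 0 T, u' τ ≤ -b - m * (cosh (m * τ) / sinh (m * τ)) * u τ) :
    AntitoneOn (fun x => u x * sinh (m * x) + b * (cosh (m * x) - 1) / m) (Ico 0 T) := by
  have hmul : ∀ x, HasDerivAt (fun y => m * y) m x := fun x => by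
    simpa using (hasDerivAt_id x).const_mul m
  refine antitoneOn_of_hasDerivWithinAt_nonpos (convex_Ico 0 T)
    (f' := fun x => u' x * sinh (m * x) + u x * (cosh (m * x) * m) + b * (sinh (m * x) * m) / m)
    ?_ (fun x hx => ?_) (fun x hx => ?_)
  · exact (hcont.mul (by fun_prop)).add (by fun_prop)
  · rw [interior_Ico] at hx ⊢
    exact (((hderiv x hx).mul (hmul x).sinh).add
      ((((hmul x).cosh.sub_const 1).const_mul b).div_const m)).hasDerivWithinAt
  · rw [interior_Ico] at hx
    have hs : 0 < sinh (m * x) := sinh_pos_iff.2 (mul_pos hm hx.1)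
    have key : u' x * sinh (m * x) ≤ -b * sinh (m * x) - m * cosh (m * x) * u x := by
      calc u' x * sinh (m * x)
          ≤ (-b - m * (cosh (m * x) / sinh (m * x)) * u x) * sinh (m * x) :=
            mul_le_mul_of_nonneg_right (hineq x hx) hs.le
        _ = -b * sinh (m * x) - m * cosh (m * x) * u x := by field_simp
    rw [mul_div_assoc, mul_div_cancel_right₀ _ hm.ne']
    linarith

theorem le_neg_div_mul_tanh_of_le_neg_coth (hm : 0 < m) (h0 : u 0 = 0)
    (hcont : ContinuousOn u (Ico 0 T))
    (hderiv : ∀ τ ∈ Ioo 0 T, HasDerivAt u (u' τ) τ)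
    (hineq : ∀ τ ∈ Ioo 0 T, u' τ ≤ -b - m * (cosh (m * τ) / sinh (m * τ)) * u τ)
    {τ : ℝ} (hτ : τ ∈ Ico 0 T) :
    u τ ≤ -(b / m) * tanh (m * τ / 2) := by
  have hw := antitoneOn_mul_sinh_add_of_le_neg_coth hm hcont hderiv hineq
    ⟨le_rfl, hτ.1.trans_lt hτ.2⟩ hτ hτ.1
  rcases hτ.1.eq_or_lt with rfl | hτ0
  · simp [h0]
  have hs : 0 < sinh (m * τ) := sinh_pos_iff.2 (mul_pos hm hτ0)
  simp only [h0, mul_zero, sinh_zero, cosh_zero, sub_self, zero_div, add_zero] at hw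
  rw [← cosh_sub_one_div_sinh, show -(b / m) * ((cosh (m * τ) - 1) / sinh (m * τ)) =
    -(b * (cosh (m * τ) - 1) / m) / sinh (m * τ) by ring, le_div_iff₀ hs]
  linarith

theorem integral_le_neg_log_cosh_of_le_neg_tanh (hm : m ≠ 0) {τ : ℝ} (hτ : 0 ≤ τ)
    (hcont : ContinuousOn u (Icc 0 τ))
    (hle : ∀ s ∈ Icc 0 τ, u s ≤ -(b / m) * tanh (m * s / 2)) :
    ∫ s in 0..τ, u s ≤ -(2 * b / m ^ 2) * log (cosh (m * τ / 2)) := calc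
  ∫ s in 0..τ, u s ≤ ∫ s in 0..τ, -(b / m) * tanh (m / 2 * s) := by
    refine intervalIntegral.integral_mono_on hτ (hcont.intervalIntegrable_of_Icc hτ)
      (((continuous_tanh.comp (continuous_const_mul _)).const_mul _).intervalIntegrable 0 τ) ?_
    simpa only [div_mul_eq_mul_div] using hle
  _ = -(2 * b / m ^ 2) * log (cosh (m * τ / 2)) := by
    rw [intervalIntegral.integral_const_mul,
      intervalIntegral.integral_comp_mul_left _ (div_ne_zero hm two_ne_zero), integral_tanh]
    simp only [mul_zero, cosh_zero, log_one, sub_zero, smul_eq_mul, div_mul_eq_mul_div]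
    field_simp

end CothComparison

theorem coth_comparison_neg_general (T b m : ℝ) (hm : 0 < m)
    (u₃ u₃' : ℝ → ℝ) (h0 : u₃ 0 = 0)
    (hcont : ContinuousOn u₃ (Ico 0 T))
    (hderiv : ∀ τ ∈ Ioo (0:ℝ) T, HasDerivAt u₃ (u₃' τ) τ)
    (hineq : ∀ τ ∈ Ioo (0:ℝ) T,
      u₃' τ ≤ -b - m * (Real.cosh (m * τ) / Real.sinh (m * τ)) * u₃ τ) :
    (∀ τ ∈ Ioo (0:ℝ) T,
      u₃ τ ≤ -b * (Real.cosh (m * τ) - 1) / (m * Real.sinh (m * τ))) ∧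
    ∀ τ ∈ Ioo (0:ℝ) T,
      (∫ s in (0:ℝ)..τ, u₃ s) ≤ -(2 * b / m ^ 2) * Real.log (Real.cosh (m * τ / 2)) := by
  have hbound : ∀ τ ∈ Ico 0 T, u₃ τ ≤ -(b / m) * tanh (m * τ / 2) :=
    fun τ hτ => le_neg_div_mul_tanh_of_le_neg_coth hm h0 hcont hderiv hineq hτ
  refine ⟨fun τ hτ => ?_, fun τ hτ => ?_⟩
  · calc u₃ τ ≤ -(b / m) * tanh (m * τ / 2) := hbound τ (Ioo_subset_Ico_self hτ)
      _ = -b * (cosh (m * τ) - 1) / (m * sinh (m * τ)) := by rw [← cosh_sub_one_div_sinh]; ring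
  · exact integral_le_neg_log_cosh_of_le_neg_tanh hm.ne' hτ.1.le
      (hcont.mono (Icc_subset_Ico_right hτ.2))
      (fun s hs => hbound s ⟨hs.1, hs.2.trans_lt hτ.2⟩)

theorem coth_comparison_neg (T b m : ℝ) (hb : 0 < b) (hm : 0 < m) (hT : 0 < T)
    (u₃ u₃' : ℝ → ℝ) (h0 : u₃ 0 = 0)
    (hcont : ContinuousOn u₃ (Ico 0 T))
    (hderiv : ∀ τ ∈ Ioo (0:ℝ) T, HasDerivAt u₃ (u₃' τ) τ)
    (hineq : ∀ τ ∈ Ioo (0:ℝ) T,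
      u₃' τ ≤ -b - m * (Real.cosh (m * τ) / Real.sinh (m * τ)) * u₃ τ) :
    (∀ τ ∈ Ioo (0:ℝ) T,
      u₃ τ ≤ -b * (Real.cosh (m * τ) - 1) / (m * Real.sinh (m * τ))) ∧
    ∀ τ ∈ Ioo (0:ℝ) T,
      (∫ s in (0:ℝ)..τ, u₃ s) ≤ -(2 * b / m ^ 2) * Real.log (Real.cosh (m * τ / 2)) :=
  coth_comparison_neg_general T b m hm u₃ u₃' h0 hcont hderiv hineq
end

section
/- Suppose u₂ : [0, T) → ℝ satisfies u₂(τ) ≥ C·cosh(mτ/2)^{8b} with C > 0, b > 0, m > 0, and u₁ : [τ₀, T) → ℝ is differentiable with u₁' ≤ 1/4 - u₂ - u₁². If T = +∞ then u₁ reaches -∞ in finite time, a contradiction; hence T < ∞. More concretely: if u₁' ≤ -1/4 - u₁² on an interval [a, T), then T ≤ a + π (finite), since solutions of x' = -1/4 - x² blow down to -∞ in time at most 2π. -/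
open Real Set

theorem riccati_blowdown (a T : ℝ) (haT : a < T)
    (u₁ u₁' : ℝ → ℝ)
    (hderiv : ∀ τ ∈ Ico a T, HasDerivAt u₁ (u₁' τ) τ)
    (hineq : ∀ τ ∈ Ico a T, u₁' τ ≤ -1/4 - (u₁ τ) ^ 2) :
    T ≤ a + 2 * π := by
  by_contra hcon
  push_neg at hcon
  set g : ℝ → ℝ := fun τ => Real.arctan (2 * u₁ τ) + τ / 2 with hg
  have hsub : Icc a (a + 2 * π) ⊆ Ico a T := fun x hx =>
    ⟨hx.1, lt_of_le_of_lt hx.2 hcon⟩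
  have hgd : ∀ τ ∈ Ico a T,
      HasDerivAt g (1 / (1 + (2 * u₁ τ) ^ 2) * (2 * u₁' τ) + 1 / 2) τ := by
    intro τ hτ
    have h1 : HasDerivAt (fun τ => 2 * u₁ τ) (2 * u₁' τ) τ :=
      (hderiv τ hτ).const_mul 2
    have h2 := (Real.hasDerivAt_arctan (2 * u₁ τ)).comp τ h1
    have h3 : HasDerivAt (fun τ : ℝ => τ / 2) (1 / 2) τ := by
      simpa using (hasDerivAt_id τ).div_const 2
    exact h2.add h3
  have hderivle : ∀ τ ∈ Ico a T,
      1 / (1 + (2 * u₁ τ) ^ 2) * (2 * u₁' τ) + 1 / 2 ≤ 0 := by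
    intro τ hτ
    have hpos : (0:ℝ) < 1 + (2 * u₁ τ) ^ 2 := by positivity
    have h := hineq τ hτ
    have key : 2 * u₁' τ ≤ -(1 / 2) * (1 + (2 * u₁ τ) ^ 2) := by nlinarith
    rw [div_mul_eq_mul_div, one_mul, div_add' _ _ _ hpos.ne', div_nonpos_iff]
    right
    constructor
    · nlinarith
    · exact hpos.le
  have hanti : AntitoneOn g (Icc a (a + 2 * π)) := by
    apply antitoneOn_of_deriv_nonpos (convex_Icc _ _)
    · intro x hx
      exact (hgd x (hsub hx)).continuousAt.continuousWithinAt
    · intro x hx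
      rw [interior_Icc] at hx
      have hx' : x ∈ Ico a T := hsub ⟨hx.1.le, hx.2.le⟩
      exact (hgd x hx').differentiableAt.differentiableWithinAt
    · intro x hx
      rw [interior_Icc] at hx
      have hx' : x ∈ Ico a T := hsub ⟨hx.1.le, hx.2.le⟩
      rw [(hgd x hx').deriv]
      exact hderivle x hx'
  have hpi := Real.pi_pos
  have hmem1 : a ∈ Icc a (a + 2 * π) := ⟨le_refl a, by nlinarith⟩
  have hmem2 : a + 2 * π ∈ Icc a (a + 2 * π) := ⟨by nlinarith, le_refl _⟩
  have hle := hanti hmem1 hmem2 (by nlinarith)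
  simp only [hg] at hle
  have h1 := Real.arctan_lt_pi_div_two (2 * u₁ a)
  have h2 := Real.neg_pi_div_two_lt_arctan (2 * u₁ (a + 2 * π))
  linarith
end

section
/- Let u₁, u₂, u₃ solve u₁' = 1/4 + u₂ - u₁², u₂' = λ u₂ u₃, u₃' = 1/4 + (2/k²)u₂ - u₁ u₃ (the case ε = -1, i.e., V₀ < 0) with u₂ > 0, u₃ > 0, u₃ < u₁, on a maximal interval (0, τ_M). If at some τ₀ we have u₁(τ₀) ≤ k² u₃(τ₀), then u₁(τ) < k² u₃(τ) for all τ ∈ (τ₀, τ_M), since d/dτ(u₁ - k²u₃) = -(k²-1)/4 - u₂ - u₁(u₁ - k²u₃) ≤ -1/4 - u₂ < 0 whenever u₁ ≥ k² u₃ and k² ≥ 2. -/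
/-! The gap `D = u₁ - k² u₃` satisfies `D' = (1 - k²)/4 - u₂ - u₁ D`, so at every zero of `D` its
derivative is at most `-1/4 - u₂ < 0`: `D` can only cross zero downwards, and once it is
nonpositive it is negative from then on. -/

open Set

theorem neg_of_deriv_neg_at_zeros {f f' : ℝ → ℝ} {a b : ℝ}
    (hf : ∀ x ∈ Icc a b, HasDerivAt f (f' x) x) (ha : f a ≤ 0)
    (hzero : ∀ x ∈ Icc a b, f x = 0 → f' x < 0) : ∀ x ∈ Ioc a b, f x < 0 := by
  have hle : ∀ x ∈ Icc a b, f x ≤ 0 :=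
    image_le_of_deriv_right_lt_deriv_boundary (B' := 0)
      (fun x hx => (hf x hx).continuousAt.continuousWithinAt)
      (fun x hx => (hf x (Ico_subset_Icc_self hx)).hasDerivWithinAt) ha
      (fun _ => hasDerivAt_const _ _) fun x hx => hzero x (Ico_subset_Icc_self hx)
  intro x hx
  refine (hle x (Ioc_subset_Icc_self hx)).lt_of_ne fun hx0 => ?_
  have hmax : IsMaxOn f (Icc a x) x := fun y hy => by
    rw [mem_ofPred_eq, hx0]
    exact hle y ⟨hy.1, hy.2.trans hx.2⟩
  have hslope : (a - x) * f' x ≤ 0 := by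
    simpa using hmax.localize.hasFDerivWithinAt_nonpos
      (hf x (Ioc_subset_Icc_self hx)).hasDerivWithinAt.hasFDerivWithinAt
      (sub_mem_posTangentConeAt_of_segment_subset ((convex_Icc a x).segment_subset
        (right_mem_Icc.2 hx.1.le) (left_mem_Icc.2 hx.1.le)))
  nlinarith [hzero x (Ioc_subset_Icc_self hx) hx0, hx.1]

theorem hasDerivAt_u₁_sub_k2_mul_u₃ {k τ : ℝ} {u₁ u₂ u₃ : ℝ → ℝ} (hk : k ≠ 0)
    (h₁ : HasDerivAt u₁ (1/4 + u₂ τ - (u₁ τ) ^ 2) τ)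
    (h₃ : HasDerivAt u₃ (1/4 + (2 / k ^ 2) * u₂ τ - u₁ τ * u₃ τ) τ) :
    HasDerivAt (fun t => u₁ t - k ^ 2 * u₃ t)
      ((1 - k ^ 2) / 4 - u₂ τ - u₁ τ * (u₁ τ - k ^ 2 * u₃ τ)) τ := by
  refine (h₁.sub (h₃.const_mul (k ^ 2))).congr_deriv ?_
  field_simp
  ring

theorem u1_lt_k2u3_invariant_general (k τ₀ τM : ℝ) (hk : 2 ≤ k ^ 2)
    (hτ₀ : τ₀ ∈ Ioo (0:ℝ) τM)
    (u₁ u₂ u₃ : ℝ → ℝ)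
    (hODE1 : ∀ τ ∈ Ioo (0:ℝ) τM,
      HasDerivAt u₁ (1/4 + u₂ τ - (u₁ τ) ^ 2) τ)
    (hODE3 : ∀ τ ∈ Ioo (0:ℝ) τM,
      HasDerivAt u₃ (1/4 + (2 / k ^ 2) * u₂ τ - u₁ τ * u₃ τ) τ)
    (hu₂ : ∀ τ ∈ Ioo (0:ℝ) τM, 0 < u₂ τ)
    (hcross : u₁ τ₀ ≤ k ^ 2 * u₃ τ₀) :
    ∀ τ ∈ Ioo τ₀ τM, u₁ τ < k ^ 2 * u₃ τ := by
  intro τ hτ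
  have hsub : Icc τ₀ τ ⊆ Ioo 0 τM := fun x hx => ⟨hτ₀.1.trans_le hx.1, hx.2.trans_lt hτ.2⟩
  have hderiv : ∀ x ∈ Icc τ₀ τ, HasDerivAt (fun t => u₁ t - k ^ 2 * u₃ t)
      ((1 - k ^ 2) / 4 - u₂ x - u₁ x * (u₁ x - k ^ 2 * u₃ x)) x := fun x hx =>
    hasDerivAt_u₁_sub_k2_mul_u₃ (by rintro rfl; norm_num at hk) (hODE1 x (hsub hx))
      (hODE3 x (hsub hx))
  have hneg := neg_of_deriv_neg_at_zeros hderiv (sub_nonpos.mpr hcross)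
    (fun x hx hx0 => by
      rw [hx0, mul_zero, sub_zero]
      linarith [hu₂ x (hsub hx)])
    τ ⟨hτ.1, le_rfl⟩
  exact sub_neg.mp hneg

theorem u1_lt_k2u3_invariant (k lam τ₀ τM : ℝ) (hk : 2 ≤ k ^ 2)
    (hlam : lam = k ^ 2 / 2 - 1) (hτ₀ : τ₀ ∈ Ioo (0:ℝ) τM)
    (u₁ u₂ u₃ : ℝ → ℝ)
    (hODE1 : ∀ τ ∈ Ioo (0:ℝ) τM,
      HasDerivAt u₁ (1/4 + u₂ τ - (u₁ τ) ^ 2) τ)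
    (hODE2 : ∀ τ ∈ Ioo (0:ℝ) τM, HasDerivAt u₂ (lam * u₂ τ * u₃ τ) τ)
    (hODE3 : ∀ τ ∈ Ioo (0:ℝ) τM,
      HasDerivAt u₃ (1/4 + (2 / k ^ 2) * u₂ τ - u₁ τ * u₃ τ) τ)
    (hu₂ : ∀ τ ∈ Ioo (0:ℝ) τM, 0 < u₂ τ)
    (hu₃ : ∀ τ ∈ Ioo (0:ℝ) τM, 0 < u₃ τ)
    (hu₃₁ : ∀ τ ∈ Ioo (0:ℝ) τM, u₃ τ < u₁ τ)
    (hcross : u₁ τ₀ ≤ k ^ 2 * u₃ τ₀) :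
    ∀ τ ∈ Ioo τ₀ τM, u₁ τ < k ^ 2 * u₃ τ :=
  u1_lt_k2u3_invariant_general k τ₀ τM hk hτ₀ u₁ u₂ u₃ hODE1 hODE3 hu₂ hcross
end
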